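/- Let X be a topological Riesz space, A ⊂ X an acceptance set with nonempty interior, and S a traded asset such that ρ_{A,S} does not attain the value −∞. If S_T is a weak topological unit, then ρ_{A,S} is finitely valued on X. -/

import Mathlib

open Filter Topology

variable {X : Type*} [Lattice X] [AddCommGroup X] [Module ℝ X]
  [CovariantClass X X (· + ·) (· ≤ ·)] [PosSMulMono ℝ X]
  [TopologicalSpace X] [IsTopologicalAddGroup X] [ContinuousSMul ℝ X]

/-- The risk measure `ρ_{A,S}(x) = inf {m : x + (m/S₀)·S_T ∈ A}`, valued in `EReal`. -/
noncomputable def rho (A : Set X) (S0 : ℝ) (ST : X) (x : X) : EReal :=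
  sInf ((fun r : ℝ => (r : EReal)) '' {r : ℝ | x + (r / S0) • ST ∈ A})

/-- A set is monotone if it contains, with any element, every larger element. -/
def MonotoneSet (A : Set X) : Prop := ∀ x ∈ A, ∀ y, x ≤ y → y ∈ A

/-- An acceptance set: nonempty, proper, and monotone. -/
def AcceptanceSet (A : Set X) : Prop := A.Nonempty ∧ A ≠ Set.univ ∧ MonotoneSet A

/-- The algebraic core (algebraic interior) of a set. -/
def algCore (A : Set X) : Set X :=
  {x | ∀ y : X, ∃ ε > 0, ∀ l : ℝ, |l| < ε → x + l • y ∈ A}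

/-- `Z` is a weak topological unit: `x ⊓ n·Z → x` for every positive `x`. -/
def WeakTopologicalUnit (Z : X) : Prop :=
  0 ≤ Z ∧ ∀ x : X, 0 ≤ x →
    Tendsto (fun n : ℕ => x ⊓ ((n : ℝ) • Z)) atTop (𝓝 x)

/-- `Z` is strictly positive: every nonzero positive continuous linear functional is
strictly positive on `Z`. -/
def StrictlyPositiveElt (Z : X) : Prop :=
  0 ≤ Z ∧ ∀ ψ : X →L[ℝ] ℝ, ψ ≠ 0 → (∀ x : X, 0 ≤ x → 0 ≤ ψ x) → 0 < ψ Z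

/-- The topology is locally solid: every neighborhood of zero contains a solid one. -/
def LocallySolidAtZero (X : Type*) [Lattice X] [AddCommGroup X] [TopologicalSpace X] : Prop :=
  ∀ U ∈ 𝓝 (0 : X), ∃ V ∈ 𝓝 (0 : X), V ⊆ U ∧ ∀ x y : X, y ∈ V → |x| ≤ |y| → x ∈ V

/-!
Pick `u` in the interior of `A`. The interior of a monotone set is monotone, so it contains
`x + (u - x)⁺ ≥ u`. Since `(u - x)⁺ ⊓ n • S_T → (u - x)⁺`, some `x + (u - x)⁺ ⊓ n • S_T` lies in
`A`, hence so does the larger `x + n • S_T`, and `ρ_{A,S}(x) ≤ n S₀`.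
-/

section OrderedTopologicalGroup

variable {E : Type*} [Lattice E] [AddCommGroup E] [CovariantClass E E (· + ·) (· ≤ ·)]

theorem MonotoneSet.add_posPart_sub_mem {A : Set E} (hA : MonotoneSet A) {u : E} (hu : u ∈ A)
    (x : E) : x + (u - x)⁺ ∈ A :=
  hA u hu _ <| calc
    u = x + (u - x) := (add_sub_cancel x u).symm
    _ ≤ x + (u - x)⁺ := add_le_add_right (le_posPart _) x

variable [TopologicalSpace E] [IsTopologicalAddGroup E]

theorem MonotoneSet.interior {A : Set E} (hA : MonotoneSet A) : MonotoneSet (interior A) := by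
  intro a ha b hab
  rw [mem_interior_iff_mem_nhds] at ha ⊢
  rw [show b = a + (b - a) by abel, ← map_add_right_nhds]
  exact mem_map.2 <| mem_of_superset ha fun z hz =>
    hA z hz _ (le_add_of_nonneg_right (sub_nonneg.2 hab))

theorem WeakTopologicalUnit.exists_add_smul_mem [Module ℝ E] {Z : E} (hZ : WeakTopologicalUnit Z)
    {A : Set E} (hA : MonotoneSet A) (hint : (interior A).Nonempty) (x : E) :
    ∃ n : ℕ, x + (n : ℝ) • Z ∈ A := by
  obtain ⟨u, hu⟩ := hint
  have hlim : Tendsto (fun n : ℕ => x + (u - x)⁺ ⊓ (n : ℝ) • Z) atTop (𝓝 (x + (u - x)⁺)) :=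
    (hZ.2 _ (posPart_nonneg _)).const_add x
  obtain ⟨n, hn⟩ :=
    (hlim.eventually (isOpen_interior.mem_nhds (hA.interior.add_posPart_sub_mem hu x))).exists
  exact ⟨n, hA _ (interior_subset hn) _ (add_le_add_right inf_le_right x)⟩

end OrderedTopologicalGroup

theorem rho_ne_top_of_add_smul_mem {E : Type*} [AddCommGroup E] [Module ℝ E] {A : Set E}
    {S0 : ℝ} (hS0 : S0 ≠ 0) {ST x : E} {c : ℝ} (h : x + c • ST ∈ A) : rho A S0 ST x ≠ ⊤ :=
  ne_top_of_le_ne_top (EReal.coe_ne_top (c * S0))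
    (sInf_le ⟨c * S0, by simpa only [Set.mem_ofPred, mul_div_cancel_right₀ _ hS0] using h, rfl⟩)

theorem rho_finite_of_weakTopologicalUnit (A : Set X) (S0 : ℝ) (ST : X)
    (hA : AcceptanceSet A) (hint : (interior A).Nonempty)
    (hS0 : 0 < S0)
    (hunit : WeakTopologicalUnit ST)
    (hnobot : ∀ x : X, rho A S0 ST x ≠ ⊥) :
    ∀ x : X, rho A S0 ST x ≠ ⊤ ∧ rho A S0 ST x ≠ ⊥ := fun x =>
  have ⟨_, hn⟩ := hunit.exists_add_smul_mem hA.2.2 hint x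
  ⟨rho_ne_top_of_add_smul_mem hS0.ne' hn, hnobot x⟩
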